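/- arXiv:quant-ph/0205033 — 2 statements merged into one kernel-verified Lean document; each statement's English description precedes it below -/
import Mathlib

section
/- Let ρ_A and ρ_B be density matrices on ℂ^n whose supports intersect trivially, i.e., the range of ρ_A and the range of ρ_B (as linear maps on ℂ^n) have intersection {0}. Then C(ρ_A, ρ_B) = 0. -/
open Matrix BigOperators
open scoped ComplexOrder

/-- A density matrix: positive semidefinite with trace 1. -/
def IsDensityMatrix {d : Type*} [Fintype d] [DecidableEq d]
    (ρ : Matrix d d ℂ) : Prop :=
  ρ.PosSemidef ∧ ρ.trace = 1

/-- The compatibility `C(ρA, ρB)`: the supremum, over all finite families of density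
matrices `σ` and weight vectors `p`, `q` (nonnegative, summing to 1) with
`∑ i, p i • σ i = ρA` and `∑ i, q i • σ i = ρB`, of the Bhattacharyya overlap
`∑ i, √(p i * q i)`. -/
noncomputable def compat {d : Type*} [Fintype d] [DecidableEq d]
    (ρA ρB : Matrix d d ℂ) : ℝ :=
  sSup { c : ℝ | ∃ (m : ℕ) (σ : Fin m → Matrix d d ℂ) (p q : Fin m → ℝ),
    (∀ i, IsDensityMatrix (σ i)) ∧ (∀ i, 0 ≤ p i) ∧ (∀ i, 0 ≤ q i) ∧
    ∑ i, p i = 1 ∧ ∑ i, q i = 1 ∧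
    ∑ i, p i • σ i = ρA ∧ ∑ i, q i • σ i = ρB ∧
    c = ∑ i, Real.sqrt (p i * q i) }

open scoped Classical in
/-- The positive semidefinite square root of a positive semidefinite matrix
(junk value `0` on non-PSD matrices). -/
noncomputable def psdSqrt {d : Type*} [Fintype d] [DecidableEq d]
    (A : Matrix d d ℂ) : Matrix d d ℂ :=
  if h : A.PosSemidef then
    (h.1.eigenvectorUnitary : Matrix d d ℂ) * diagonal ((↑) ∘ Real.sqrt ∘ h.1.eigenvalues) *
      (star h.1.eigenvectorUnitary : Matrix d d ℂ) else 0

/-- The fidelity `F(ρA, ρB) = Tr √(√ρA ρB √ρA)`. -/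
noncomputable def fidelity {d : Type*} [Fintype d] [DecidableEq d]
    (ρA ρB : Matrix d d ℂ) : ℝ :=
  (psdSqrt (psdSqrt ρA * ρB * psdSqrt ρA)).trace.re

/-- The pure-state density matrix `|ψ⟩⟨ψ|` associated to a vector `ψ`. -/
def pureState {d : Type*} [Fintype d] [DecidableEq d] (ψ : d → ℂ) : Matrix d d ℂ :=
  Matrix.vecMulVec ψ (star ψ)

/-!
If `σ` occurs with positive weight `p` in a decomposition of `ρ`, then `p • σ ≤ ρ` in the Loewner
order, so `ker ρ ≤ ker σ`; since both are Hermitian, this dualises to `range σ ≤ range ρ`. A state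
occurring with positive weight in decompositions of both `ρA` and `ρB` would therefore be supported
in `range ρA ⊓ range ρB = ⊥`, which no trace-one matrix is. So every term `√(pᵢ qᵢ)` of the
overlap vanishes.
-/

open scoped MatrixOrder

namespace Matrix

variable {𝕜 n : Type*} [RCLike 𝕜] [Fintype n] [DecidableEq n]

theorem ker_toLin'_le_ker_of_le {A B : Matrix n n 𝕜} (hA : 0 ≤ A) (hAB : A ≤ B) :
    LinearMap.ker (toLin' B) ≤ LinearMap.ker (toLin' A) := by
  intro x hx
  rw [LinearMap.mem_ker, toLin'_apply] at hx ⊢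
  refine (hA.posSemidef.dotProduct_mulVec_zero_iff x).mp (le_antisymm ?_
    (hA.posSemidef.dotProduct_mulVec_nonneg x))
  simpa [sub_mulVec, hx] using (le_iff.mp hAB).dotProduct_mulVec_nonneg x

theorem IsHermitian.range_toLin'_le_range_iff {A B : Matrix n n 𝕜}
    (hA : A.IsHermitian) (hB : B.IsHermitian) :
    LinearMap.range (toLin' A) ≤ LinearMap.range (toLin' B) ↔
      LinearMap.ker (toLin' B) ≤ LinearMap.ker (toLin' A) := by
  have isSymmetric {M : Matrix n n 𝕜} (hM : M.IsHermitian) :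
      (toEuclideanCLM (𝕜 := 𝕜) M : EuclideanSpace 𝕜 n →ₗ[𝕜] _).IsSymmetric := by
    rw [coe_toEuclideanCLM_eq_toEuclideanLin]
    exact isSymmetric_toEuclideanLin_iff.mpr hM
  -- The kernel/range duality of symmetric operators lives on `EuclideanSpace`; transport to it.
  let e := WithLp.linearEquiv 2 𝕜 (n → 𝕜)
  have conj (M : Matrix n n 𝕜) : toLin' M =
      e.toLinearMap ∘ₗ (toEuclideanCLM (𝕜 := 𝕜) M).toLinearMap ∘ₗ e.symm.toLinearMap :=
    rfl
  simp only [conj, LinearEquiv.ker_comp, LinearMap.range_comp, LinearEquiv.range,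
    Submodule.map_top]
  rw [LinearMap.ker_comp, LinearMap.ker_comp, Submodule.map_le_map_iff_of_injective e.injective,
    Submodule.comap_le_comap_iff_of_surjective e.symm.surjective]
  exact (ContinuousLinearMap.ker_le_ker_iff_range_le_range (isSymmetric hA) (isSymmetric hB)).symm

theorem range_toLin'_le_range_of_le {A B : Matrix n n 𝕜} (hA : 0 ≤ A) (hAB : A ≤ B) :
    LinearMap.range (toLin' A) ≤ LinearMap.range (toLin' B) :=
  (hA.posSemidef.isHermitian.range_toLin'_le_range_iff (hA.trans hAB).posSemidef.isHermitian).mpr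
    (ker_toLin'_le_ker_of_le hA hAB)

theorem range_toLin'_le_range_sum_smul {ι : Type*} [Fintype ι] {σ : ι → Matrix n n 𝕜}
    {p : ι → ℝ} (hσ : ∀ i, 0 ≤ σ i) (hp : ∀ i, 0 ≤ p i) {j : ι} (hj : p j ≠ 0) :
    LinearMap.range (toLin' (σ j)) ≤ LinearMap.range (toLin' (∑ i, p i • σ i)) := by
  have hterm (i : ι) : 0 ≤ p i • σ i := smul_nonneg (hp i) (hσ i)
  have hrange : LinearMap.range (toLin' (p j • σ j)) = LinearMap.range (toLin' (σ j)) := by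
    rw [RCLike.real_smul_eq_coe_smul (K := 𝕜), map_smul,
      LinearMap.range_smul _ _ (RCLike.ofReal_ne_zero.mpr hj)]
  rw [← hrange]
  exact range_toLin'_le_range_of_le (hterm j)
    (Finset.single_le_sum (fun i _ => hterm i) (Finset.mem_univ j))

theorem mul_eq_zero_of_disjoint_range_sum_smul {ι : Type*} [Fintype ι]
    {σ : ι → Matrix n n 𝕜} {p q : ι → ℝ} (hσ : ∀ i, 0 ≤ σ i) (hσ₀ : ∀ i, σ i ≠ 0)
    (hp : ∀ i, 0 ≤ p i) (hq : ∀ i, 0 ≤ q i)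
    (hdisj : Disjoint (LinearMap.range (toLin' (∑ i, p i • σ i)))
      (LinearMap.range (toLin' (∑ i, q i • σ i)))) (i : ι) :
    p i * q i = 0 := by
  by_contra hpq
  obtain ⟨hpi, hqi⟩ := mul_ne_zero_iff.mp hpq
  refine hσ₀ i (toLin'.injective ?_)
  rw [map_zero, ← LinearMap.range_eq_bot, eq_bot_iff, ← hdisj.eq_bot]
  exact le_inf (range_toLin'_le_range_sum_smul hσ hp hpi)
    (range_toLin'_le_range_sum_smul hσ hq hqi)

end Matrix

theorem IsDensityMatrix.ne_zero {d : Type*} [Fintype d] [DecidableEq d] {ρ : Matrix d d ℂ}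
    (hρ : IsDensityMatrix ρ) : ρ ≠ 0 := by
  rintro rfl
  simpa using hρ.2

theorem compat_eq_zero_of_disjoint_supports_general {n : ℕ}
    (ρA ρB : Matrix (Fin n) (Fin n) ℂ)
    (hdisj : LinearMap.range (Matrix.toLin' ρA) ⊓ LinearMap.range (Matrix.toLin' ρB) = ⊥) :
    compat ρA ρB = 0 := by
  refine le_antisymm (Real.sSup_nonpos ?_) (Real.sSup_nonneg ?_)
  · rintro _ ⟨m, σ, p, q, hσ, hp, hq, -, -, rfl, rfl, rfl⟩
    have hpq := mul_eq_zero_of_disjoint_range_sum_smul (fun i => (hσ i).1.nonneg)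
      (fun i => (hσ i).ne_zero) hp hq (disjoint_iff.mpr hdisj)
    simp [hpq]
  · rintro _ ⟨m, σ, p, q, -, -, -, -, -, -, -, rfl⟩
    positivity

/-- **Theorem 1(2).** Incompatible states (states whose supports intersect
trivially) have compatibility `0`. -/
theorem compat_eq_zero_of_disjoint_supports {n : ℕ}
    (ρA ρB : Matrix (Fin n) (Fin n) ℂ)
    (hA : IsDensityMatrix ρA) (hB : IsDensityMatrix ρB)
    (hdisj : LinearMap.range (Matrix.toLin' ρA) ⊓ LinearMap.range (Matrix.toLin' ρB) = ⊥) :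
    compat ρA ρB = 0 :=
  compat_eq_zero_of_disjoint_supports_general ρA ρB hdisj
end

section
/- Let P and Q be n×n complex matrices that are orthogonal projections (Hermitian and idempotent), and suppose they have no common nonzero fixed vector, i.e., the intersection of the range of P and the range of Q is {0}. Then Tr[(PQ)^n] → 0 as n → ∞. -/
open Matrix BigOperators
open scoped ComplexOrder

/-! If `P Q v = μ v` with `v ≠ 0` and `1 ≤ ‖μ‖`, then `‖v‖ ≤ ‖P Q v‖ ≤ ‖Q v‖ ≤ ‖v‖`, so `P` does not
shorten `Q v`; hence `Q v` lies in the range of `P` as well as in that of `Q`, so `Q v = 0` and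
then `v = 0`. Thus the spectrum of `P Q` lies in the open unit disc, and by Gelfand's formula
`(P Q) ^ k → 0`, so the traces tend to `0` as well. -/

open Filter Topology
open scoped NNReal ENNReal

theorem tendsto_pow_atTop_nhds_zero_of_forall_norm_lt_one {A : Type*} [NormedRing A]
    [NormedAlgebra ℂ A] [CompleteSpace A] {a : A} (h : ∀ z ∈ spectrum ℂ a, ‖z‖ < 1) :
    Tendsto (fun k : ℕ => a ^ k) atTop (𝓝 0) := by
  rcases subsingleton_or_nontrivial A with hA | hA
  · simp [Subsingleton.elim _ (0 : A)]
  obtain ⟨z, hz, hzρ⟩ := spectrum.exists_nnnorm_eq_spectralRadius a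
  have hρ : spectralRadius ℂ a < 1 := by
    rw [← hzρ, ENNReal.coe_lt_one_iff, ← NNReal.coe_lt_one, coe_nnnorm]
    exact h z hz
  obtain ⟨r, hρr, hr1⟩ := ENNReal.lt_iff_exists_nnreal_btwn.1 hρ
  have hbound : ∀ᶠ k : ℕ in atTop, ‖a ^ k‖ ≤ (r : ℝ) ^ k := by
    filter_upwards [(spectrum.pow_norm_pow_one_div_tendsto_nhds_spectralRadius a).eventually
      (gt_mem_nhds hρr), eventually_gt_atTop 0] with k hk hk0
    rw [ENNReal.ofReal_lt_coe_iff (by positivity), one_div] at hk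
    have := (Real.rpow_inv_lt_iff_of_pos (norm_nonneg _) r.2 (Nat.cast_pos.2 hk0)).1 hk
    exact_mod_cast this.le
  exact squeeze_zero_norm' hbound
    (tendsto_pow_atTop_nhds_zero_of_lt_one r.2 (by exact_mod_cast hr1))

open scoped Matrix.Norms.L2Operator in
theorem Matrix.tendsto_trace_pow_atTop_nhds_zero {ι : Type*} [Fintype ι] [DecidableEq ι]
    {M : Matrix ι ι ℂ} (h : ∀ z ∈ spectrum ℂ M, ‖z‖ < 1) :
    Tendsto (fun k : ℕ => (M ^ k).trace) atTop (𝓝 0) := by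
  simpa only [Function.comp_def, id, trace_zero] using
    (continuous_id.matrix_trace.tendsto 0).comp
      (tendsto_pow_atTop_nhds_zero_of_forall_norm_lt_one h)

namespace LinearMap.IsSymmetricProjection

variable {𝕜 E : Type*} [RCLike 𝕜] [NormedAddCommGroup E] [InnerProductSpace 𝕜 E]
  {p q : E →ₗ[𝕜] E}

theorem norm_apply_le (hp : p.IsSymmetricProjection) (v : E) : ‖p v‖ ≤ ‖v‖ := by
  obtain ⟨_, hp_eq⟩ := p.isSymmetricProjection_iff_eq_coe_starProjection_range.1 hp
  rw [hp_eq]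
  exact (range p).norm_starProjection_apply_le v

theorem mem_range_of_norm_apply_eq (hp : p.IsSymmetricProjection) {v : E} (h : ‖p v‖ = ‖v‖) :
    v ∈ range p := by
  obtain ⟨_, hp_eq⟩ := p.isSymmetricProjection_iff_eq_coe_starProjection_range.1 hp
  rw [hp_eq] at h
  exact ((range p).mem_iff_norm_starProjection v).2 h

theorem norm_lt_one_of_apply_apply_eq_smul (hp : p.IsSymmetricProjection)
    (hq : q.IsSymmetricProjection) (hpq : range p ⊓ range q = ⊥) {v : E} (hv : v ≠ 0) {μ : 𝕜}
    (h : p (q v) = μ • v) : ‖μ‖ < 1 := by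
  by_contra! hμ
  have hv_le : ‖v‖ ≤ ‖p (q v)‖ := by
    rw [h, norm_smul]
    exact le_mul_of_one_le_left (norm_nonneg v) hμ
  have hqv_mem : q v ∈ range p := hp.mem_range_of_norm_apply_eq <|
    (hp.norm_apply_le (q v)).antisymm ((hq.norm_apply_le v).trans hv_le)
  have hqv : q v = 0 := by
    simpa [hpq] using Submodule.mem_inf.2 ⟨hqv_mem, mem_range_self q v⟩
  exact hv (norm_le_zero_iff.1 (by simpa [hqv] using hv_le))

end LinearMap.IsSymmetricProjection

namespace Matrix

theorem range_toLpLin {R m n : Type*} [CommRing R] [Fintype n] [DecidableEq n]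
    (p q : ℝ≥0∞) (A : Matrix m n R) :
    LinearMap.range (toLpLin p q A) =
      (LinearMap.range (toLin' A)).comap (WithLp.linearEquiv q R (m → R)).toLinearMap := by
  ext x
  exact ⟨fun ⟨y, hy⟩ => ⟨WithLp.ofLp y, by rw [← hy]; rfl⟩,
    fun ⟨y, hy⟩ => ⟨WithLp.toLp p y, congrArg (WithLp.toLp q) hy⟩⟩

theorem isSymmetricProjection_toEuclideanLin {𝕜 n : Type*} [RCLike 𝕜] [Fintype n]
    [DecidableEq n] {A : Matrix n n 𝕜} (hA : A.IsHermitian) (hA2 : IsIdempotentElem A) :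
    (toEuclideanLin A).IsSymmetricProjection :=
  ⟨hA2.map (toLpLinAlgEquiv 2), isSymmetric_toEuclideanLin_iff.2 hA⟩

end Matrix

/-- If `P` and `Q` are orthogonal projections whose ranges intersect trivially,
then `Tr[(PQ)^n] → 0` as `n → ∞`. -/
theorem trace_pow_proj_mul_proj_tendsto_zero {n : ℕ}
    (P Q : Matrix (Fin n) (Fin n) ℂ)
    (hP : P.IsHermitian) (hP2 : P * P = P)
    (hQ : Q.IsHermitian) (hQ2 : Q * Q = Q)
    (hdisj : LinearMap.range (Matrix.toLin' P) ⊓ LinearMap.range (Matrix.toLin' Q) = ⊥) :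
    Filter.Tendsto (fun k : ℕ => ((P * Q) ^ k).trace) Filter.atTop (nhds 0) := by
  refine tendsto_trace_pow_atTop_nhds_zero fun μ hμ => ?_
  rw [← spectrum_toLpLin 2, ← Module.End.hasEigenvalue_iff_mem_spectrum] at hμ
  obtain ⟨v, hv⟩ := hμ.exists_hasEigenvector
  have hdisj' : LinearMap.range (toEuclideanLin P) ⊓ LinearMap.range (toEuclideanLin Q) = ⊥ := by
    rw [range_toLpLin, range_toLpLin, ← Submodule.comap_inf, hdisj, Submodule.comap_bot,
      LinearEquiv.ker]
  refine (isSymmetricProjection_toEuclideanLin hP hP2).norm_lt_one_of_apply_apply_eq_smul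
    (isSymmetricProjection_toEuclideanLin hQ hQ2) hdisj' hv.2 ?_
  simpa using hv.apply_eq_smul
end
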